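/- Let C = {(t², t³) : t ∈ ℝ} ⊆ ℝ² be the cuspidal cubic curve. There is no open set U ⊆ ℝ² with C ⊆ U together with a Lipschitz map r : U → ℝ² satisfying r(U) ⊆ C and r(x) = x for all x ∈ C. In other words, C is not a Lipschitz retract of any of its open neighborhoods in ℝ². -/

import Mathlib

noncomputable section

open MvPolynomial Metric

/-- Interpret a plain function `Fin n → ℝ` as a point of Euclidean space `ℝⁿ`. -/
def toEuc {n : ℕ} (f : Fin n → ℝ) : EuclideanSpace ℝ (Fin n) := WithLp.toLp 2 f

/-- A basic semialgebraic set: the solution set of one polynomial equation and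
finitely many strict polynomial inequalities. -/
def IsBasicSemialgebraic {n : ℕ} (S : Set (EuclideanSpace ℝ (Fin n))) : Prop :=
  ∃ (p : MvPolynomial (Fin n) ℝ) (k : ℕ) (q : Fin k → MvPolynomial (Fin n) ℝ),
    S = {x | eval (fun i => x i) p = 0 ∧ ∀ j, 0 < eval (fun i => x i) (q j)}

/-- A semialgebraic set: a finite union of basic semialgebraic sets. -/
def IsSemialgebraic {n : ℕ} (S : Set (EuclideanSpace ℝ (Fin n))) : Prop :=
  ∃ (m : ℕ) (B : Fin m → Set (EuclideanSpace ℝ (Fin n))),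
    (∀ i, IsBasicSemialgebraic (B i)) ∧ S = ⋃ i, B i

/-- The sup norm of a point of `ℝⁿ`. -/
def supNorm {n : ℕ} (x : EuclideanSpace ℝ (Fin n)) : ℝ := ⨆ i, |x i|

/-- The cuspidal cubic curve `{(t², t³) : t ∈ ℝ} ⊆ ℝ²`. -/
def cuspCurve : Set (EuclideanSpace ℝ (Fin 2)) :=
  {p | ∃ t : ℝ, p = toEuc ![t ^ 2, t ^ 3]}

/-! Let `r` be an `L`-Lipschitz retraction. For small `t > 0` the vertical segment from
`(t², -t³)` to `(t², t³)` lies in `U`, and its endpoints are fixed by `r`. By the intermediate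
value theorem the second coordinate of `r` vanishes somewhere on it, and the only point of the
cusp with vanishing second coordinate is the origin. That point lies within `2t³` of `(t², t³)`,
while its image lies at distance at least `t²` from the image `(t², t³)`; so `t² ≤ 2Lt³`,
which fails as `t → 0`. -/

open Set Filter Topology

local notation "ℝ²" => EuclideanSpace ℝ (Fin 2)

def cuspPoint (t : ℝ) : ℝ² := toEuc ![t ^ 2, t ^ 3]

lemma cuspPoint_mem_cuspCurve (t : ℝ) : cuspPoint t ∈ cuspCurve := ⟨t, rfl⟩

lemma cuspPoint_zero : cuspPoint 0 = 0 := by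
  ext i; fin_cases i <;> simp [cuspPoint, toEuc]

lemma continuous_cuspPoint : Continuous cuspPoint :=
  (PiLp.continuous_toLp 2 _).comp (by fun_prop)

lemma sq_le_norm_cuspPoint (t : ℝ) : t ^ 2 ≤ ‖cuspPoint t‖ := by
  rw [EuclideanSpace.norm_eq, Fin.sum_univ_two]
  apply Real.le_sqrt_of_sq_le
  simp [cuspPoint, toEuc]

lemma dist_cuspPoint_neg (t : ℝ) : dist (cuspPoint (-t)) (cuspPoint t) = 2 * |t| ^ 3 := by
  rw [EuclideanSpace.dist_eq, Fin.sum_univ_two]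
  simp only [cuspPoint, toEuc, PiLp.toLp_apply, Matrix.cons_val_zero, Matrix.cons_val_one,
    Real.dist_eq, even_two, Even.neg_pow, sub_self, abs_zero, zero_pow two_ne_zero, zero_add,
    sq_abs]
  rw [Real.sqrt_sq_eq_abs, show (-t) ^ 3 - t ^ 3 = -(2 * t ^ 3) by ring, abs_neg, abs_mul,
    abs_pow, abs_two]

lemma eq_zero_of_mem_cuspCurve_of_apply_one_eq_zero {p : ℝ²} (hp : p ∈ cuspCurve)
    (h1 : p 1 = 0) : p = 0 := by
  obtain ⟨t, rfl⟩ := hp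
  have : t = 0 := by simpa [toEuc] using h1
  subst this
  exact cuspPoint_zero

lemma eventually_segment_cuspPoint_subset {U : Set ℝ²} (hU : U ∈ 𝓝 0) :
    ∀ᶠ t in 𝓝 0, segment ℝ (cuspPoint (-t)) (cuspPoint t) ⊆ U := by
  obtain ⟨ε, hε, hball⟩ := Metric.mem_nhds_iff.1 hU
  have hpos : Tendsto cuspPoint (𝓝 0) (𝓝 0) :=
    cuspPoint_zero ▸ continuous_cuspPoint.tendsto 0
  have hneg : Tendsto (fun t => cuspPoint (-t)) (𝓝 0) (𝓝 0) :=
    hpos.comp (by simpa using tendsto_neg (0 : ℝ))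
  filter_upwards [hneg (ball_mem_nhds 0 hε), hpos (ball_mem_nhds 0 hε)] with t hn hp
  exact ((convex_ball 0 ε).segment_subset hn hp).trans hball

section Segment

variable {r : ℝ² → ℝ²} {t : ℝ}

lemma exists_mem_segment_map_eq_zero (ht : 0 ≤ t)
    (hcont : ContinuousOn r (segment ℝ (cuspPoint (-t)) (cuspPoint t)))
    (hmaps : MapsTo r (segment ℝ (cuspPoint (-t)) (cuspPoint t)) cuspCurve)
    (hneg : r (cuspPoint (-t)) = cuspPoint (-t)) (hpos : r (cuspPoint t) = cuspPoint t) :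
    ∃ p ∈ segment ℝ (cuspPoint (-t)) (cuspPoint t), r p = 0 := by
  have hcont₁ : ContinuousOn (fun p => r p 1) (segment ℝ (cuspPoint (-t)) (cuspPoint t)) := by
    fun_prop
  have hzero : (0 : ℝ) ∈ Icc (r (cuspPoint (-t)) 1) (r (cuspPoint t) 1) := by
    rw [hneg, hpos]
    simp only [cuspPoint, toEuc, PiLp.toLp_apply, Matrix.cons_val_one, Matrix.cons_val_zero]
    constructor <;> nlinarith [pow_nonneg ht 3]
  obtain ⟨p, hp, hp₁⟩ := (convex_segment _ _).isPreconnected.intermediate_value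
    (left_mem_segment ℝ _ _) (right_mem_segment ℝ _ _) hcont₁ hzero
  exact ⟨p, hp, eq_zero_of_mem_cuspCurve_of_apply_one_eq_zero (hmaps hp) hp₁⟩

lemma sq_le_of_lipschitzOnWith_of_mapsTo_cuspCurve {L : NNReal} (ht : 0 ≤ t)
    (hLip : LipschitzOnWith L r (segment ℝ (cuspPoint (-t)) (cuspPoint t)))
    (hmaps : MapsTo r (segment ℝ (cuspPoint (-t)) (cuspPoint t)) cuspCurve)
    (hneg : r (cuspPoint (-t)) = cuspPoint (-t)) (hpos : r (cuspPoint t) = cuspPoint t) :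
    t ^ 2 ≤ 2 * L * t ^ 3 := by
  obtain ⟨p, hp, hrp⟩ := exists_mem_segment_map_eq_zero ht hLip.continuousOn hmaps hneg hpos
  calc t ^ 2 ≤ dist (r p) (r (cuspPoint t)) := by
        rw [hrp, hpos, dist_zero_left]; exact sq_le_norm_cuspPoint t
    _ ≤ L * dist p (cuspPoint t) := hLip.dist_le_mul p hp _ (right_mem_segment ℝ _ _)
    _ ≤ L * dist (cuspPoint (-t)) (cuspPoint t) := by
        gcongr; exact segment_subset_closedBall_right _ _ hp
    _ = 2 * L * t ^ 3 := by rw [dist_cuspPoint_neg, abs_of_nonneg ht]; ring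

end Segment

/-- The cuspidal cubic `C = {(t², t³)}` is not a Lipschitz retract of
any open neighborhood of itself in `ℝ²`: there is no open `U ⊇ C` and Lipschitz
`r : U → ℝ²` with `r(U) ⊆ C` and `r = id` on `C`. -/
theorem cuspCurve_not_lipschitz_retract :
    ¬ ∃ (U : Set (EuclideanSpace ℝ (Fin 2)))
        (r : EuclideanSpace ℝ (Fin 2) → EuclideanSpace ℝ (Fin 2)) (L : NNReal),
      IsOpen U ∧ cuspCurve ⊆ U ∧ LipschitzOnWith L r U ∧
      (∀ x ∈ U, r x ∈ cuspCurve) ∧ (∀ x ∈ cuspCurve, r x = x) := by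
  rintro ⟨U, r, L, hU, hCU, hLip, hrU, hid⟩
  have hU0 : U ∈ 𝓝 0 := hU.mem_nhds (hCU (cuspPoint_zero ▸ cuspPoint_mem_cuspCurve 0))
  have hsmall : ∀ᶠ t : ℝ in 𝓝 0, 2 * L * t < 1 :=
    (continuous_const.mul continuous_id).continuousAt.eventually_lt continuousAt_const (by simp)
  obtain ⟨t, ⟨hsub, hLt⟩, ht⟩ :=
    ((((eventually_segment_cuspPoint_subset hU0).and hsmall).filter_mono nhdsWithin_le_nhds).and
      (self_mem_nhdsWithin (s := Ioi (0 : ℝ)))).exists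
  have hbound := sq_le_of_lipschitzOnWith_of_mapsTo_cuspCurve (le_of_lt ht) (hLip.mono hsub)
    (fun p hp => hrU p (hsub hp)) (hid _ (cuspPoint_mem_cuspCurve _))
    (hid _ (cuspPoint_mem_cuspCurve _))
  nlinarith [pow_pos (show (0 : ℝ) < t from ht) 2]
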